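/- Let Ω ⊂ ℝ³ be a bounded open set with C¹ boundary, and let u, v, w : Ω → ℝ³ be smooth vector fields with w vanishing on ∂Ω. Then ∫_Ω div(u·∇v) div w dx = ∫_Ω (∇v : ∇ᵀu) div w dx − ∫_Ω (div v)(div u)(div w) dx + ∫_Ω (∇(div v) ⊗ u) : ∇w dx + ∫_Ω (div v) ∇u : ∇ᵀw dx. -/

import Mathlib

open Set MeasureTheory

/-- Spatial partial derivative `∂f/∂xⱼ` of a scalar field on `ℝ³`. -/
noncomputable def pd (f : (Fin 3 → ℝ) → ℝ) (x : Fin 3 → ℝ) (j : Fin 3) : ℝ :=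
  fderiv ℝ f x (Pi.single j 1)

/-- Gradient matrix `(∇v)ᵢⱼ = ∂ⱼvᵢ`. -/
noncomputable def gradm (v : (Fin 3 → ℝ) → (Fin 3 → ℝ)) (x : Fin 3 → ℝ) :
    Fin 3 → Fin 3 → ℝ :=
  fun i j => pd (fun y => v y i) x j

/-- Divergence of a vector field. -/
noncomputable def divg (v : (Fin 3 → ℝ) → (Fin 3 → ℝ)) (x : Fin 3 → ℝ) : ℝ :=
  ∑ j : Fin 3, pd (fun y => v y j) x j

/-- Convective derivative `(u·∇)v` with components `∑ₖ uₖ∂ₖvⱼ`. -/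
noncomputable def conv (u v : (Fin 3 → ℝ) → (Fin 3 → ℝ)) (x : Fin 3 → ℝ) : Fin 3 → ℝ :=
  fun i => ∑ j : Fin 3, u x j * pd (fun y => v y i) x j

@[fun_prop]
lemma contDiff_pd {f : (Fin 3 → ℝ) → ℝ} (hf : ContDiff ℝ (⊤ : ℕ∞) f) (j : Fin 3) :
    ContDiff ℝ (⊤ : ℕ∞) fun y => pd f y j :=
  (hf.fderiv_right (by simp)).clm_apply contDiff_const

@[fun_prop]
lemma pd_differentiable {f : (Fin 3 → ℝ) → ℝ} (hf : ContDiff ℝ (⊤ : ℕ∞) f) (j : Fin 3) :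
    Differentiable ℝ fun y => pd f y j :=
  (contDiff_pd hf j).differentiable (by simp)

@[fun_prop]
lemma pd_differentiableAt {f : (Fin 3 → ℝ) → ℝ} (hf : ContDiff ℝ (⊤ : ℕ∞) f) (j : Fin 3)
    (x : Fin 3 → ℝ) : DifferentiableAt ℝ (fun y => pd f y j) x :=
  (pd_differentiable hf j) x

lemma pd_add {f g : (Fin 3 → ℝ) → ℝ} {x : Fin 3 → ℝ} (hf : DifferentiableAt ℝ f x)
    (hg : DifferentiableAt ℝ g x) (j : Fin 3) :
    pd (fun y => f y + g y) x j = pd f x j + pd g x j := by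
  simp [pd, fderiv_fun_add hf hg]

lemma pd_sub {f g : (Fin 3 → ℝ) → ℝ} {x : Fin 3 → ℝ} (hf : DifferentiableAt ℝ f x)
    (hg : DifferentiableAt ℝ g x) (j : Fin 3) :
    pd (fun y => f y - g y) x j = pd f x j - pd g x j := by
  simp [pd, fderiv_fun_sub hf hg]

lemma pd_mul {f g : (Fin 3 → ℝ) → ℝ} {x : Fin 3 → ℝ} (hf : DifferentiableAt ℝ f x)
    (hg : DifferentiableAt ℝ g x) (j : Fin 3) :
    pd (fun y => f y * g y) x j = pd f x j * g x + f x * pd g x j := by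
  simp [pd, fderiv_fun_mul hf hg]; ring

lemma pd_sum {F : Fin 3 → (Fin 3 → ℝ) → ℝ} {x : Fin 3 → ℝ}
    (hF : ∀ k, DifferentiableAt ℝ (F k) x) (j : Fin 3) :
    pd (fun y => ∑ k, F k y) x j = ∑ k, pd (F k) x j := by
  simp [pd, fderiv_fun_sum (fun k _ => hF k)]

lemma pd_comm {f : (Fin 3 → ℝ) → ℝ} (hf : ContDiff ℝ (⊤ : ℕ∞) f) (x : Fin 3 → ℝ) (j k : Fin 3) :
    pd (fun y => pd f y j) x k = pd (fun y => pd f y k) x j := by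
  have hd : ∀ y, HasFDerivAt f (fderiv ℝ f y) y := fun y =>
    (hf.differentiable (by simp) y).hasFDerivAt
  have hd2 : HasFDerivAt (fderiv ℝ f) (fderiv ℝ (fderiv ℝ f) x) x :=
    (((hf.fderiv_right (m := (⊤ : ℕ∞)) (by simp)).differentiable (by simp)) x).hasFDerivAt
  have hsym := second_derivative_symmetric hd hd2 (Pi.single j 1) (Pi.single k 1)
  have e : ∀ a b : Fin 3, pd (fun y => pd f y a) x b
      = fderiv ℝ (fderiv ℝ f) x (Pi.single b 1) (Pi.single a 1) := by
    intro a b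
    have h' : (fun y => pd f y a) = fun y => (fderiv ℝ f y) (Pi.single a 1) := rfl
    rw [h', pd, fderiv_clm_apply (((hf.fderiv_right (m := (⊤ : ℕ∞)) (by simp)).differentiable (by simp)) x)
      (differentiableAt_const _)]
    simp
  rw [e, e, hsym]

/-- The auxiliary vector field whose divergence collects all boundary terms. -/
noncomputable def Phi (u v w : (Fin 3 → ℝ) → (Fin 3 → ℝ)) (y : Fin 3 → ℝ) : Fin 3 → ℝ :=
  fun i =>
    (∑ k, pd (fun z => divg v z) y k * u y k) * w y i
    - (∑ m, pd (fun z => divg v z) y m * w y m) * u y i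
    + divg v y * divg u y * w y i
    - divg v y * (∑ m, pd (fun z => u z i) y m * w y m)

lemma pointwise_identity (u v w : (Fin 3 → ℝ) → (Fin 3 → ℝ))
    (hu : ContDiff ℝ (⊤ : ℕ∞) u) (hv : ContDiff ℝ (⊤ : ℕ∞) v) (hw : ContDiff ℝ (⊤ : ℕ∞) w) (x : Fin 3 → ℝ) :
    divg (fun y => conv u v y) x * divg w x
      = (∑ j : Fin 3, ∑ k : Fin 3, gradm v x j k * gradm u x k j) * divg w x
        - divg v x * divg u x * divg w x
        + (∑ i : Fin 3, ∑ k : Fin 3,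
            pd (fun y => divg v y) x i * u x k * gradm w x i k)
        + divg v x * (∑ i : Fin 3, ∑ j : Fin 3, gradm u x i j * gradm w x j i)
        + divg (fun y => Phi u v w y) x := by
  have hud : Differentiable ℝ u := hu.differentiable (by simp)
  have hvd : Differentiable ℝ v := hv.differentiable (by simp)
  have hwd : Differentiable ℝ w := hw.differentiable (by simp)
  simp only [divg, conv, gradm, Phi]
  simp (disch := fun_prop) only [pd_add, pd_sub, pd_mul, pd_sum]
  have hT : ∀ i k : Fin 3, pd (fun y => pd (fun z => v z i) y k) x i
      = pd (fun y => pd (fun z => v z i) y i) x k := fun i k => pd_comm (by fun_prop) x k i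
  have hU : ∀ i m : Fin 3, pd (fun y => pd (fun z => u z i) y m) x i
      = pd (fun y => pd (fun z => u z i) y i) x m := fun i m => pd_comm (by fun_prop) x m i
  have hG : ∀ j k i : Fin 3, pd (fun y => pd (fun z => pd (fun s => v s j) z j) y k) x i
      = pd (fun y => pd (fun z => pd (fun s => v s j) z j) y i) x k :=
    fun j k i => pd_comm (by fun_prop) x k i
  have hG10 : ∀ j : Fin 3, _ := fun j => hG j 1 0
  have hG20 : ∀ j : Fin 3, _ := fun j => hG j 2 0
  have hG21 : ∀ j : Fin 3, _ := fun j => hG j 2 1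
  simp only [hT, hU]
  simp only [Fin.sum_univ_three]
  simp only [hG10, hG20, hG21]
  ring

lemma key1d (U : Set ℝ) (hUo : IsOpen U) (hUb : Bornology.IsBounded U)
    (g φ : ℝ → ℝ) (hgφ : ∀ t, HasDerivAt g (φ t) t) (hφc : Continuous φ)
    (hg0 : ∀ t ∈ frontier U, g t = 0) : ∫ t in U, φ t = 0 := by
  classical
  obtain ⟨r, hr⟩ := hUb.subset_ball 0
  set R : ℝ := |r| + 1 with hR
  have hUR : U ⊆ Ioo (-R) R := by
    intro t ht
    have := hr ht
    rw [Metric.mem_ball, Real.dist_eq, sub_zero] at this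
    have h1 : |t| < R := lt_of_lt_of_le this (by rw [hR]; nlinarith [abs_nonneg r, le_abs_self r])
    exact abs_lt.1 h1
  set a : ℝ := -(R + 1) with ha
  set b : ℝ := R + 1 with hb
  have hab : a ≤ b := by rw [ha, hb]; nlinarith [abs_nonneg r]
  have hclos : closure U ⊆ Icc (-R) R :=
    closure_minimal (hUR.trans Ioo_subset_Icc_self) isClosed_Icc
  have hanotin : a ∉ closure U := fun h => by
    have := (hclos h).1; rw [ha] at this; nlinarith [abs_nonneg r]
  have hbnotin : b ∉ closure U := fun h => by
    have := (hclos h).2; rw [hb] at this; nlinarith [abs_nonneg r]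
  have hgc : Continuous g := by
    rw [continuous_iff_continuousAt]; exact fun t => (hgφ t).continuousAt
  -- the exceptional countable set
  set S : Set ℝ := {t | t ∉ U ∧ ∃ q : ℚ, t < (q : ℝ) ∧ (q : ℝ) ∈ U ∧ Ioo t (q : ℝ) ⊆ U}
    with hS
  have hSsub : S ⊆ closure U := by
    rintro t ⟨htU, q, hq1, hq2, hq3⟩
    have : t ∈ closure (Ioo t (q : ℝ)) := by
      rw [closure_Ioo (ne_of_lt hq1)]; exact ⟨le_refl t, le_of_lt hq1⟩
    exact closure_mono hq3 this
  have hScount : S.Countable := by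
    have hQ : ∀ t : S, ∃ q : ℚ, (t : ℝ) < (q : ℝ) ∧ (q : ℝ) ∈ U ∧ Ioo (t : ℝ) (q : ℝ) ⊆ U :=
      fun t => t.2.2
    choose Q hQ1 hQ2 hQ3 using hQ
    have hinj : Function.Injective Q := by
      intro t t' hqq
      by_contra hne
      have hne' : (t : ℝ) ≠ (t' : ℝ) := fun h => hne (Subtype.ext h)
      rcases lt_or_gt_of_ne hne' with h | h
      · rcases lt_trichotomy ((t' : ℝ)) ((Q t : ℝ)) with h2 | h2 | h2
        · exact t'.2.1 (hQ3 t ⟨h, h2⟩)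
        · exact t'.2.1 (h2 ▸ hQ2 t)
        · rw [hqq] at h2; exact absurd (hQ1 t') (not_lt.2 (le_of_lt h2))
      · rcases lt_trichotomy ((t : ℝ)) ((Q t' : ℝ)) with h2 | h2 | h2
        · exact t.2.1 (hQ3 t' ⟨h, h2⟩)
        · exact t.2.1 (h2 ▸ hQ2 t')
        · rw [← hqq] at h2; exact absurd (hQ1 t) (not_lt.2 (le_of_lt h2))
    exact Set.countable_coe_iff.mp hinj.countable
  -- glued function and candidate derivative
  set G : ℝ → ℝ := fun t => if t ∈ closure U then g t else 0 with hG
  set f' : ℝ → ℝ := fun t => if t ∈ U ∪ S then φ t else 0 with hf'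
  have hGcont : Continuous G := by
    refine Continuous.if ?_ hgc continuous_const
    intro t ht
    have : frontier {x : ℝ | x ∈ closure U} ⊆ frontier U := by
      rw [show {x : ℝ | x ∈ closure U} = closure U from rfl]
      exact frontier_closure_subset
    exact hg0 t (this ht)
  have hfront : ∀ t ∈ frontier U, G t = 0 := by
    intro t ht
    rw [hG]; simp only [ht.1 , if_pos]
    · exact hg0 t ht
  -- derivative of G
  have hd : ∀ t ∈ Ioo a b, HasDerivWithinAt G (f' t) (Ioi t) t := by
    intro t _
    by_cases htU : t ∈ U
    · have hev : G =ᶠ[nhds t] g := by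
        filter_upwards [hUo.mem_nhds htU] with y hy
        rw [hG]; simp [subset_closure hy]
      have : HasDerivAt G (φ t) t := (hgφ t).congr_of_eventuallyEq hev
      have hft : f' t = φ t := by rw [hf']; simp [htU]
      rw [hft]; exact this.hasDerivWithinAt
    by_cases htC : t ∈ closure U
    swap
    · -- exterior point
      have hev : G =ᶠ[nhds t] (fun _ => 0) := by
        filter_upwards [isClosed_closure.isOpen_compl.mem_nhds htC] with y hy
        simp only [hG]; exact if_neg hy
      have hderiv : HasDerivAt G 0 t := (hasDerivAt_const t 0).congr_of_eventuallyEq hev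
      have hft : f' t = 0 := by
        rw [hf']
        have : t ∉ S := fun hts => htC (hSsub hts)
        simp [htU, this]
      rw [hft]; exact hderiv.hasDerivWithinAt
    -- frontier point
    have htF : t ∈ frontier U := by rw [hUo.frontier_eq]; exact ⟨htC, htU⟩
    have hgt : g t = 0 := hg0 t htF
    have hGt : G t = 0 := hfront t htF
    by_cases hφt : φ t = 0
    · -- zero derivative case
      have h1 : (fun y => g y - g t) =o[nhds t] (fun y => y - t) := by
        have := hasDerivAt_iff_isLittleO.1 (hgφ t)
        rw [hφt] at this; simpa using this
      have h2 : (fun y => G y - G t) =O[nhds t] (fun y => g y - g t) := by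
        apply Asymptotics.IsBigO.of_bound 1
        filter_upwards with y
        rw [one_mul, hGt, hgt, sub_zero, sub_zero, hG]
        by_cases hy : y ∈ closure U <;> simp [hy, abs_nonneg]
      have hderiv : HasDerivAt G 0 t := by
        rw [hasDerivAt_iff_isLittleO]
        simpa using h2.trans_isLittleO h1
      have hft : f' t = 0 := by
        rw [hf']; by_cases hts : t ∈ U ∪ S <;> simp [hts, hφt]
      rw [hft]; exact hderiv.hasDerivWithinAt
    · -- nonzero derivative: one-sided analysis
      have hslope := hasDerivAt_iff_tendsto_slope.1 (hgφ t)
      have hne : ∀ᶠ y in nhdsWithin t (Ioi t), g y ≠ 0 := by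
        have h0 : ∀ᶠ z in nhds (φ t), z ≠ 0 := eventually_ne_nhds hφt
        have h1 : ∀ᶠ y in nhdsWithin t {t}ᶜ, slope g t y ≠ 0 := hslope.eventually h0
        have h2 : nhdsWithin t (Ioi t) ≤ nhdsWithin t {t}ᶜ :=
          nhdsWithin_mono t (fun y hy => ne_of_gt hy)
        filter_upwards [h2 h1, self_mem_nhdsWithin] with y hy hyt
        intro hgy
        apply hy
        rw [slope_def_field, hgy, hgt]; simp
      obtain ⟨c, hc, hsub⟩ := mem_nhdsGT_iff_exists_Ioo_subset.1 hne
      have hcover : Ioo t c ⊆ U ∪ (closure U)ᶜ := by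
        intro y hy
        by_contra hcon
        have hyF : y ∈ frontier U := by
          rw [hUo.frontier_eq]
          exact ⟨by_contra fun h => hcon (Or.inr h), fun h => hcon (Or.inl h)⟩
        exact hsub hy (hg0 y hyF)
      have hdisj : Disjoint U (closure U)ᶜ := by
        rw [Set.disjoint_left]; exact fun y hy hy2 => hy2 (subset_closure hy)
      rcases (isPreconnected_Ioo).subset_or_subset hUo isClosed_closure.isOpen_compl
          hdisj hcover with hcase | hcase
      · -- right side inside U
        have htS : t ∈ S := by
          obtain ⟨q, hq1, hq2⟩ := exists_rat_btwn (show t < c from hc)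
          exact ⟨htU, q, hq1, hcase ⟨hq1, hq2⟩, fun y hy => hcase ⟨hy.1, hy.2.trans hq2⟩⟩
        have hft : f' t = φ t := by rw [hf']; simp [htS]
        rw [hft]
        refine ((hgφ t).hasDerivWithinAt).congr_of_eventuallyEq ?_ (by rw [hG]; simp [htC])
        filter_upwards [Ioo_mem_nhdsGT_of_mem ⟨le_refl t, hc⟩] with y hy
        rw [hG]; simp [subset_closure (hcase hy)]
      · -- right side outside closure U
        have htS : t ∉ S := by
          rintro ⟨-, q, hq1, hq2, hq3⟩
          obtain ⟨y, hy1, hy2⟩ := exists_between (lt_min hq1 hc)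
          exact hcase ⟨hy1, hy2.trans_le (min_le_right _ _)⟩
            (subset_closure (hq3 ⟨hy1, hy2.trans_le (min_le_left _ _)⟩))
        have hft : f' t = 0 := by rw [hf']; simp [htU, htS]
        rw [hft]
        refine (hasDerivWithinAt_const t (Ioi t) 0).congr_of_eventuallyEq ?_ hGt
        filter_upwards [Ioo_mem_nhdsGT_of_mem ⟨le_refl t, hc⟩] with y hy
        simp only [hG]; exact if_neg (hcase hy)
  -- integrability
  have haeeq : f' =ᵐ[volume.restrict (Icc a b)] U.indicator φ := by
    have hnull : volume S = 0 := hScount.measure_zero _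
    have hsub2 : {t : ℝ | f' t ≠ U.indicator φ t} ⊆ S := by
      intro t ht
      by_contra htS
      apply ht
      by_cases htU : t ∈ U
      · rw [hf', Set.indicator_of_mem htU]; simp [htU]
      · rw [hf', Set.indicator_of_notMem htU]; simp [htU, htS]
    have hae0 : ∀ᵐ t, f' t = U.indicator φ t := by
      rw [ae_iff]; exact measure_mono_null hsub2 hnull
    exact ae_restrict_of_ae hae0
  have hindint : IntegrableOn (U.indicator φ) (Icc a b) :=
    (hφc.integrableOn_Icc).indicator hUo.measurableSet
  have hfint : IntegrableOn f' (Icc a b) := hindint.congr (haeeq.symm)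
  have hII : IntervalIntegrable f' volume a b :=
    (intervalIntegrable_iff_integrableOn_Icc_of_le hab).2 hfint
  have hFTC := intervalIntegral.integral_eq_sub_of_hasDeriv_right_of_le hab
    hGcont.continuousOn hd hII
  have hGa : G a = 0 := by rw [hG]; simp [hanotin]
  have hGb : G b = 0 := by rw [hG]; simp [hbnotin]
  rw [hGa, hGb, sub_zero] at hFTC
  -- conclude
  have h1 : ∫ t in a..b, f' t = ∫ t in Ioc a b, f' t := intervalIntegral.integral_of_le hab
  have h2 : ∫ t in Ioc a b, f' t = ∫ t in Ioc a b, U.indicator φ t := by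
    apply integral_congr_ae
    exact ae_restrict_of_ae_restrict_of_subset Ioc_subset_Icc_self haeeq
  have h3 : ∫ t in Ioc a b, U.indicator φ t = ∫ t in Ioc a b ∩ U, φ t :=
    setIntegral_indicator hUo.measurableSet
  have h4 : Ioc a b ∩ U = U := by
    apply Set.inter_eq_self_of_subset_right
    intro t ht
    have := hUR ht
    constructor
    · rw [ha]; linarith [this.1]
    · rw [hb]; linarith [this.2]
  rw [h1, h2, h3, h4] at hFTC
  rw [hFTC]

lemma cont_integrableOn {Ω : Set (Fin 3 → ℝ)} (hΩb : Bornology.IsBounded Ω)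
    {h : (Fin 3 → ℝ) → ℝ} (hc : Continuous h) : IntegrableOn h Ω :=
  (hc.continuousOn.integrableOn_compact hΩb.isCompact_closure).mono_set subset_closure

lemma integral_pd_eq_zero (Ω : Set (Fin 3 → ℝ)) (hΩo : IsOpen Ω)
    (hΩb : Bornology.IsBounded Ω) (f : (Fin 3 → ℝ) → ℝ) (hf : ContDiff ℝ (⊤ : ℕ∞) f)
    (hf0 : ∀ x ∈ frontier Ω, f x = 0) (k : Fin 3) : ∫ x in Ω, pd f x k = 0 := by
  have hpdc : Continuous fun x => pd f x k := (contDiff_pd hf k).continuous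
  have hint : IntegrableOn (fun x => pd f x k) Ω := cont_integrableOn hΩb hpdc
  rw [← integral_indicator hΩo.measurableSet]
  set F : (Fin 3 → ℝ) → ℝ := Ω.indicator (fun x => pd f x k) with hF
  have hFint : Integrable F := hint.integrable_indicator hΩo.measurableSet
  set e := MeasurableEquiv.piFinSuccAbove (fun _ : Fin 3 => ℝ) k with he
  have hmp : MeasurePreserving e volume volume :=
    MeasureTheory.volume_preserving_piFinSuccAbove (fun _ : Fin 3 => ℝ) k
  have hmp' : MeasurePreserving e.symm volume volume := hmp.symm e
  have h1 : ∫ p : ℝ × (Fin 2 → ℝ), F (e.symm p) = ∫ x, F x :=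
    hmp'.integral_comp e.symm.measurableEmbedding F
  rw [← h1]
  have hFint' : Integrable (F ∘ e.symm) :=
    (hmp'.integrable_comp_emb e.symm.measurableEmbedding).2 hFint
  rw [show ∫ p : ℝ × (Fin 2 → ℝ), F (e.symm p) = ∫ p : ℝ × (Fin 2 → ℝ), (F ∘ e.symm) p from rfl,
    MeasureTheory.Measure.volume_eq_prod, integral_prod_symm _ (by
      rwa [← MeasureTheory.Measure.volume_eq_prod])]
  have hinner : ∀ y : Fin 2 → ℝ, ∫ t : ℝ, F (e.symm (t, y)) = 0 := by
    intro y
    set ι : ℝ → (Fin 3 → ℝ) := fun t => k.insertNth t y with hι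
    have hιe : ∀ t, e.symm (t, y) = ι t := by
      intro t
      rw [he]
      simp [MeasurableEquiv.piFinSuccAbove_symm_apply, Fin.insertNthEquiv, hι]
    have hιlin : ι = fun t => k.insertNth 0 y + t • Pi.single k 1 := by
      funext t
      funext j
      refine Fin.succAboveCases k ?_ ?_ j
      · simp [hι, Fin.insertNth_apply_same, Pi.single_eq_same]
      · intro m
        simp [hι, Fin.insertNth_apply_succAbove,
          Pi.single_eq_of_ne (Fin.succAbove_ne k m)]
    have hιcont : Continuous ι := by
      rw [hιlin]
      exact continuous_const.add (continuous_id.smul continuous_const)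
    set U : Set ℝ := ι ⁻¹' Ω with hU
    have hUo' : IsOpen U := hΩo.preimage hιcont
    have hUb : Bornology.IsBounded U := by
      obtain ⟨r, hr⟩ := hΩb.subset_ball 0
      refine (Metric.isBounded_ball (x := (0 : ℝ)) (r := r)).subset ?_
      intro t ht
      have h2 : ι t ∈ Metric.ball (0 : Fin 3 → ℝ) r := hr ht
      rw [Metric.mem_ball, dist_zero_right] at h2 ⊢
      calc ‖t‖ = ‖(ι t) k‖ := by rw [hι]; simp [Fin.insertNth_apply_same]
        _ ≤ ‖ι t‖ := norm_le_pi_norm (ι t) k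
        _ < r := h2
    have hgφ : ∀ t, HasDerivAt (fun s => f (ι s)) (pd f (ι t) k) t := by
      intro t
      have hline : HasDerivAt ι (Pi.single k 1) t := by
        rw [hιlin]
        simpa using (((hasDerivAt_id t).smul_const (Pi.single k (1:ℝ)))).const_add
          (Fin.insertNth (α := fun _ => ℝ) k 0 y)
      exact ((hf.differentiable (by simp) (ι t)).hasFDerivAt).comp_hasDerivAt t hline
    have hg0 : ∀ t ∈ frontier U, f (ι t) = 0 := by
      intro t ht
      apply hf0
      rw [hΩo.frontier_eq]
      rw [hUo'.frontier_eq] at ht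
      exact ⟨hιcont.closure_preimage_subset Ω ht.1, ht.2⟩
    have hkey := key1d U hUo' hUb (fun s => f (ι s)) (fun t => pd f (ι t) k) hgφ
      (hpdc.comp hιcont) hg0
    have heq : (fun t : ℝ => F (e.symm (t, y)))
        = fun t => U.indicator (fun s => pd f (ι s) k) t := by
      funext t
      rw [hιe t, hF, hU, ← Set.indicator_comp_right ι (g := fun x => pd f x k)]
      rfl
    rw [heq, integral_indicator hUo'.measurableSet]
    exact hkey
  have hinner' : ∀ y : Fin 2 → ℝ, ∫ t : ℝ, (F ∘ e.symm) (t, y) = 0 := hinner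
  simp only [hinner', integral_zero]


@[fun_prop]
lemma pd_continuous {f : (Fin 3 → ℝ) → ℝ} (hf : ContDiff ℝ (⊤ : ℕ∞) f) (j : Fin 3) :
    Continuous fun y => pd f y j :=
  (contDiff_pd hf j).continuous

@[fun_prop]
lemma contDiff_sum3 {ι : Type*} (s : Finset ι) (F : ι → (Fin 3 → ℝ) → ℝ)
    (hF : ∀ i, ContDiff ℝ (⊤ : ℕ∞) (F i)) : ContDiff ℝ (⊤ : ℕ∞) fun y => ∑ k ∈ s, F k y :=
  ContDiff.sum fun i _ => hF i

@[fun_prop]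
lemma continuous_sum3 {ι : Type*} (s : Finset ι) (F : ι → (Fin 3 → ℝ) → ℝ)
    (hF : ∀ i, Continuous (F i)) : Continuous fun y => ∑ k ∈ s, F k y :=
  continuous_finset_sum s fun i _ => hF i

lemma integral_divg_zero (Ω : Set (Fin 3 → ℝ)) (hΩo : IsOpen Ω)
    (hΩb : Bornology.IsBounded Ω) (Φ : (Fin 3 → ℝ) → (Fin 3 → ℝ))
    (hΦ : ∀ i, ContDiff ℝ (⊤ : ℕ∞) fun y => Φ y i)
    (h0 : ∀ x ∈ frontier Ω, ∀ i, Φ x i = 0) : ∫ x in Ω, divg Φ x = 0 := by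
  have h1 : ∫ x in Ω, divg Φ x = ∫ x in Ω, ∑ j : Fin 3, pd (fun y => Φ y j) x j := rfl
  rw [h1, integral_finset_sum _ (fun j _ =>
    cont_integrableOn hΩb (pd_continuous (hΦ j) j))]
  refine Finset.sum_eq_zero fun j _ => ?_
  exact integral_pd_eq_zero Ω hΩo hΩb (fun y => Φ y j) (hΦ j)
    (fun x hx => h0 x hx j) j

/-- **Integration-by-parts identity for the divergence of the convective term.**
For smooth `u, v, w` on a bounded open `Ω ⊂ ℝ³` (with `C¹` boundary) and `w = 0` on `∂Ω`:
`∫ div(u·∇v) div w = ∫ (∇v:∇ᵀu) div w − ∫ (div v)(div u)(div w)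
  + ∫ (∇(div v)⊗u):∇w + ∫ (div v) ∇u:∇ᵀw`. -/
theorem divergence_convective_term_integration_by_parts
    (Ω : Set (Fin 3 → ℝ)) (hΩo : IsOpen Ω) (hΩb : Bornology.IsBounded Ω)
    (u v w : (Fin 3 → ℝ) → (Fin 3 → ℝ))
    (hu : ContDiff ℝ (⊤ : ℕ∞) u) (hv : ContDiff ℝ (⊤ : ℕ∞) v) (hw : ContDiff ℝ (⊤ : ℕ∞) w)
    (hw0 : ∀ x ∈ frontier Ω, w x = 0) :
    ∫ x in Ω, divg (fun y => conv u v y) x * divg w x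
      = (∫ x in Ω, (∑ j : Fin 3, ∑ k : Fin 3, gradm v x j k * gradm u x k j) * divg w x)
        - (∫ x in Ω, divg v x * divg u x * divg w x)
        + (∫ x in Ω, ∑ i : Fin 3, ∑ k : Fin 3,
            pd (fun y => divg v y) x i * u x k * gradm w x i k)
        + (∫ x in Ω, divg v x
            * ∑ i : Fin 3, ∑ j : Fin 3, gradm u x i j * gradm w x j i) := by
  have huc : Continuous u := hu.continuous
  have hvc : Continuous v := hv.continuous
  have hwc : Continuous w := hw.continuous
  -- continuity of the five integrands
  have hc1 : Continuous fun x =>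
      (∑ j : Fin 3, ∑ k : Fin 3, gradm v x j k * gradm u x k j) * divg w x := by
    simp only [gradm, divg]; fun_prop
  have hc2 : Continuous fun x => divg v x * divg u x * divg w x := by
    simp only [divg]; fun_prop
  have hc3 : Continuous fun x => ∑ i : Fin 3, ∑ k : Fin 3,
      pd (fun y => divg v y) x i * u x k * gradm w x i k := by
    simp only [gradm, divg]; fun_prop
  have hc4 : Continuous fun x => divg v x
      * ∑ i : Fin 3, ∑ j : Fin 3, gradm u x i j * gradm w x j i := by
    simp only [gradm, divg]; fun_prop
  have hcK : Continuous fun x => divg (fun y => Phi u v w y) x := by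
    simp only [divg, Phi]; fun_prop
  have h1 := cont_integrableOn hΩb hc1
  have h2 := cont_integrableOn hΩb hc2
  have h3 := cont_integrableOn hΩb hc3
  have h4 := cont_integrableOn hΩb hc4
  have hK := cont_integrableOn hΩb hcK
  -- the boundary term vanishes
  have hKzero : ∫ x in Ω, divg (fun y => Phi u v w y) x = 0 := by
    refine integral_divg_zero Ω hΩo hΩb _ (fun i => by simp only [Phi, divg]; fun_prop) ?_
    intro x hx i
    have hwx : ∀ m : Fin 3, w x m = 0 := fun m => by rw [hw0 x hx]; rfl
    simp [Phi, hwx]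
  have hpt := pointwise_identity u v w hu hv hw
  calc ∫ x in Ω, divg (fun y => conv u v y) x * divg w x
      = ∫ x in Ω,
        ((∑ j : Fin 3, ∑ k : Fin 3, gradm v x j k * gradm u x k j) * divg w x
        - divg v x * divg u x * divg w x
        + (∑ i : Fin 3, ∑ k : Fin 3,
            pd (fun y => divg v y) x i * u x k * gradm w x i k)
        + divg v x * (∑ i : Fin 3, ∑ j : Fin 3, gradm u x i j * gradm w x j i)
        + divg (fun y => Phi u v w y) x) := by
        apply integral_congr_ae
        filter_upwards with x
        exact hpt x
    _ = (∫ x in Ω, (∑ j : Fin 3, ∑ k : Fin 3, gradm v x j k * gradm u x k j) * divg w x)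
        - (∫ x in Ω, divg v x * divg u x * divg w x)
        + (∫ x in Ω, ∑ i : Fin 3, ∑ k : Fin 3,
            pd (fun y => divg v y) x i * u x k * gradm w x i k)
        + (∫ x in Ω, divg v x
            * ∑ i : Fin 3, ∑ j : Fin 3, gradm u x i j * gradm w x j i)
        + ∫ x in Ω, divg (fun y => Phi u v w y) x := by
        have hA2 : Integrable (fun x =>
            (∑ j : Fin 3, ∑ k : Fin 3, gradm v x j k * gradm u x k j) * divg w x
            - divg v x * divg u x * divg w x) (volume.restrict Ω) := h1.sub h2
        have hA3 : Integrable (fun x =>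
            (∑ j : Fin 3, ∑ k : Fin 3, gradm v x j k * gradm u x k j) * divg w x
            - divg v x * divg u x * divg w x
            + ∑ i : Fin 3, ∑ k : Fin 3,
                pd (fun y => divg v y) x i * u x k * gradm w x i k)
            (volume.restrict Ω) := hA2.add h3
        have hA4 : Integrable (fun x =>
            (∑ j : Fin 3, ∑ k : Fin 3, gradm v x j k * gradm u x k j) * divg w x
            - divg v x * divg u x * divg w x
            + (∑ i : Fin 3, ∑ k : Fin 3,
                pd (fun y => divg v y) x i * u x k * gradm w x i k)
            + divg v x * ∑ i : Fin 3, ∑ j : Fin 3, gradm u x i j * gradm w x j i)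
            (volume.restrict Ω) := hA3.add h4
        rw [integral_add hA4 hK, integral_add hA3 h4, integral_add hA2 h3,
          integral_sub h1 h2]
    _ = _ := by rw [hKzero, add_zero]
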